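/- arXiv:1903.11841 — 2 statements merged into one kernel-verified Lean document; each statement's English description precedes it below -/
import Mathlib

section
/- Let (a,b,c,d,e,f) ∈ ℝ⁶ and let Ric(a,b,c,d,e,f) be the symmetric 2×2 matrix with entries Ric₁₁ = (a−d)d + b(f−c), Ric₁₂ = Ric₂₁ = cd − be, Ric₂₂ = c(f−c) + (a−d)e. Assume Ric(a,b,c,d,e,f) ≠ 0. Then Ric₁₁ = 0 and Ric₁₂ = 0 (i.e., Ric is a multiple of dx²⊗dx²) if and only if b = 0 and d = 0. -/
/-!
Both `b · Ric₂₂` and `d · Ric₂₂` are linear combinations of `Ric₁₁` and `Ric₁₂`. So if these two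
entries vanish while `Ric ≠ 0`, then `Ric₂₂ ≠ 0` by symmetry, and `b = d = 0` follows.
-/

/-- The Ricci tensor of the Type A model with Christoffel symbols `(a,b,c,d,e,f)`. -/
def Ric (a b c d e f : ℝ) : Matrix (Fin 2) (Fin 2) ℝ :=
  !![(a-d)*d + b*(f-c), c*d - b*e; c*d - b*e, c*(f-c) + (a-d)*e]

section Ric

variable (a b c d e f : ℝ)

@[simp] lemma Ric_zero_zero : Ric a b c d e f 0 0 = (a-d)*d + b*(f-c) := rfl

@[simp] lemma Ric_zero_one : Ric a b c d e f 0 1 = c*d - b*e := rfl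

@[simp] lemma Ric_one_zero : Ric a b c d e f 1 0 = c*d - b*e := rfl

@[simp] lemma Ric_one_one : Ric a b c d e f 1 1 = c*(f-c) + (a-d)*e := rfl

lemma Ric_eq_zero_iff :
    Ric a b c d e f = 0 ↔
      Ric a b c d e f 0 0 = 0 ∧ Ric a b c d e f 0 1 = 0 ∧ Ric a b c d e f 1 1 = 0 := by
  simp only [← Matrix.ext_iff, Fin.forall_fin_two, Matrix.zero_apply, Ric_one_zero, ← Ric_zero_one]
  tauto

lemma b_mul_Ric_one_one :
    b * Ric a b c d e f 1 1 = c * Ric a b c d e f 0 0 - (a - d) * Ric a b c d e f 0 1 := by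
  simp only [Ric_zero_zero, Ric_zero_one, Ric_one_one]
  ring

lemma d_mul_Ric_one_one :
    d * Ric a b c d e f 1 1 = e * Ric a b c d e f 0 0 + (f - c) * Ric a b c d e f 0 1 := by
  simp only [Ric_zero_zero, Ric_zero_one, Ric_one_one]
  ring

end Ric

theorem stmt_3 (a b c d e f : ℝ) (h : Ric a b c d e f ≠ 0) :
    (Ric a b c d e f 0 0 = 0 ∧ Ric a b c d e f 0 1 = 0) ↔ (b = 0 ∧ d = 0) := by
  constructor
  · rintro ⟨h00, h01⟩
    have h11 : Ric a b c d e f 1 1 ≠ 0 := fun h11 =>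
      h ((Ric_eq_zero_iff a b c d e f).mpr ⟨h00, h01, h11⟩)
    have hb : b * Ric a b c d e f 1 1 = 0 := by
      rw [b_mul_Ric_one_one, h00, h01]; ring
    have hd : d * Ric a b c d e f 1 1 = 0 := by
      rw [d_mul_Ric_one_one, h00, h01]; ring
    exact ⟨(mul_eq_zero.mp hb).resolve_right h11, (mul_eq_zero.mp hd).resolve_right h11⟩
  · rintro ⟨rfl, rfl⟩
    simp
end

section
/- The map V₂ : ℝ³ → ℝ⁶ defined by V₂(u,v,w) = (1 − 2uw + vw², w(1 − uw + vw²), u − vw, −vw², v, u + vw) is injective. -/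
/-!
From `V2 (u, v, w) = (a, b, c, d, e, f)` one reads off `v = e`, `2u = c + f`, `2vw = f - c` and
`2uw = 1 - a - d`. Hence `w` is determined unless `u = v = 0`, and then `b = w`.
-/

/-- The space of Type B models: `(a,b,c,d,e,f)` records the Christoffel symbols
`Γᵢⱼᵏ = Aᵢⱼᵏ / x¹`. -/
abbrev R6 : Type := ℝ × ℝ × ℝ × ℝ × ℝ × ℝ

def V2 : ℝ × ℝ × ℝ → R6 := fun p =>
  (1 - 2*p.1*p.2.2 + p.2.1*p.2.2^2,
   p.2.2*(1 - p.1*p.2.2 + p.2.1*p.2.2^2),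
   p.1 - p.2.1*p.2.2, -p.2.1*p.2.2^2, p.2.1, p.1 + p.2.1*p.2.2)

theorem stmt_18 : Function.Injective V2 := by
  rintro ⟨u, v, w⟩ ⟨u', v', w'⟩ h
  simp only [V2, Prod.mk.injEq] at h
  obtain ⟨ha, hb, hc, hd, rfl, hf⟩ := h
  obtain rfl : u = u' := by linarith
  have hvw : v * w = v * w' := by linarith
  have huw : u * w = u * w' := by linarith
  suffices w = w' by rw [this]
  rcases mul_eq_mul_left_iff.mp hvw with hw | rfl
  · exact hw
  rcases mul_eq_mul_left_iff.mp huw with hw | rfl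
  · exact hw
  simpa using hb
end
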